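/- High risk aversion limit of the boundary-wealth-to-consumption ratios: with r, δ, κ, α, β fixed (so that m₁, m₂, z_α, z_β do not depend on γ), and with γ* = (γ−1)/γ and all coefficients C₁,…,C₆ viewed as functions of γ, for all h₁ ≥ h₂ > 0 one has lim_{γ→∞} x_lavs(h₁,h₂;γ)/h₁ = 1/r and lim_{γ→∞} x_gloom(h₁,h₂;γ)/h₂ = 1/r, where x_lavs(h₁,h₂;γ) = −m₁C₁(h₁,h₂)(z_α h₁^{−γ})^{m₁−1} − m₂C₂(h₁)(z_α h₁^{−γ})^{m₂−1} + h₁/r and x_gloom(h₁,h₂;γ) = −m₁C₅(h₂)(z_β h₂^{−γ})^{m₁−1} − m₂C₆(h₁,h₂)(z_β h₂^{−γ})^{m₂−1} + h₂/r. -/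

import Mathlib

/-- Coefficient `C₂(h)`. -/
noncomputable def C2 (r δ κ γ m₁ m₂ α zα : ℝ) (h : ℝ) : ℝ :=
  (1 - (γ - 1) / γ) / ((m₁ - m₂) * (m₂ - (γ - 1) / γ)) *
    (m₁ * (α * δ - 1) / δ * zα ^ (-m₂) + (m₁ - 1) / r * zα ^ (1 - m₂)) *
    h ^ (1 + γ * (m₂ - 1))

/-- Coefficient `C₅(h)`. -/
noncomputable def C5 (r δ κ γ m₁ m₂ β zβ : ℝ) (h : ℝ) : ℝ :=
  (1 - (γ - 1) / γ) / ((m₁ - m₂) * (m₁ - (γ - 1) / γ)) *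
    (m₂ * (β * δ + 1) / δ * zβ ^ (-m₁) + (1 - m₂) / r * zβ ^ (1 - m₁)) *
    h ^ (1 + γ * (m₁ - 1))

/-- Coefficient `C₃(h)`. -/
noncomputable def C3 (r δ κ γ m₁ m₂ β zβ : ℝ) (h : ℝ) : ℝ :=
  C5 r δ κ γ m₁ m₂ β zβ h +
    2 * ((γ - 1) / γ - 1) / (κ ^ 2 * (m₁ - m₂) * m₁ * (m₁ - 1) * (m₁ - (γ - 1) / γ)) *
      h ^ (1 + γ * (m₁ - 1))

/-- Coefficient `C₄(h)`. -/
noncomputable def C4 (r δ κ γ m₁ m₂ α zα : ℝ) (h : ℝ) : ℝ :=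
  C2 r δ κ γ m₁ m₂ α zα h -
    2 * ((γ - 1) / γ - 1) / (κ ^ 2 * (m₁ - m₂) * m₂ * (m₂ - 1) * (m₂ - (γ - 1) / γ)) *
      h ^ (1 + γ * (m₂ - 1))

/-- Coefficient `C₁(h₁,h₂)`. -/
noncomputable def C1 (r δ κ γ m₁ m₂ β zβ : ℝ) (h₁ h₂ : ℝ) : ℝ :=
  C3 r δ κ γ m₁ m₂ β zβ h₂ +
    2 * (1 - (γ - 1) / γ) / (κ ^ 2 * (m₁ - m₂) * m₁ * (m₁ - 1) * (m₁ - (γ - 1) / γ)) *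
      h₁ ^ (1 + γ * (m₁ - 1))

/-- Coefficient `C₆(h₁,h₂)`. -/
noncomputable def C6 (r δ κ γ m₁ m₂ α zα : ℝ) (h₁ h₂ : ℝ) : ℝ :=
  C4 r δ κ γ m₁ m₂ α zα h₁ -
    2 * (1 - (γ - 1) / γ) / (κ ^ 2 * (m₁ - m₂) * m₂ * (m₂ - 1) * (m₂ - (γ - 1) / γ)) *
      h₂ ^ (1 + γ * (m₂ - 1))


open Filter Real

lemma tendsto_gammastar : Tendsto (fun γ : ℝ => (γ - 1) / γ) atTop (nhds 1) := by
  have h : (fun γ : ℝ => (γ - 1) / γ) =ᶠ[atTop] fun γ => 1 - γ⁻¹ := by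
    filter_upwards [eventually_ne_atTop (0 : ℝ)] with γ hγ
    field_simp
  have : Tendsto (fun γ : ℝ => 1 - γ⁻¹) atTop (nhds (1 - 0)) :=
    tendsto_const_nhds.sub tendsto_inv_atTop_zero
  simpa using this.congr' h.symm

lemma tendsto_mul_bounded {f g : ℝ → ℝ} (hf : Filter.Tendsto f Filter.atTop (nhds 0))
    (hg : ∀ᶠ γ in Filter.atTop, |g γ| ≤ 1) :
    Filter.Tendsto (fun γ => f γ * g γ) Filter.atTop (nhds 0) := by
  refine squeeze_zero_norm' (a := fun γ => |f γ|) ?_ ?_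
  · filter_upwards [hg] with γ h
    calc ‖f γ * g γ‖ = |f γ| * |g γ| := abs_mul _ _
      _ ≤ |f γ| * 1 := mul_le_mul_of_nonneg_left h (abs_nonneg _)
      _ = |f γ| := mul_one _
  · simpa using hf.abs

lemma rpow_key {h h' z : ℝ} (hh : 0 < h) (hh' : 0 < h') (hz : 0 < z) (γ m : ℝ) :
    h ^ (1 + γ * (m - 1)) * (z * h' ^ (-γ)) ^ (m - 1)
      = z ^ (m - 1) * h * (h / h') ^ (γ * (m - 1)) := by
  rw [Real.rpow_add hh, Real.rpow_one,
    Real.mul_rpow hz.le (Real.rpow_nonneg hh'.le _),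
    ← Real.rpow_mul hh'.le, Real.div_rpow hh.le hh'.le, neg_mul,
    Real.rpow_neg hh'.le]
  ring

lemma rpow_key' {h z : ℝ} (hh : 0 < h) (hz : 0 < z) (γ m : ℝ) :
    h ^ (1 + γ * (m - 1)) * (z * h ^ (-γ)) ^ (m - 1) = z ^ (m - 1) * h := by
  rw [rpow_key hh hh hz, div_self hh.ne', Real.one_rpow, mul_one]

/-- High risk aversion limit of the boundary-wealth-to-consumption
ratios: with `r, δ, κ, α, β` fixed (so `m₁, m₂, z_α, z_β` do not depend on `γ`),
for all `h₁ ≥ h₂ > 0`,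
`lim_{γ→∞} x_lavs(h₁,h₂;γ)/h₁ = 1/r` and `lim_{γ→∞} x_gloom(h₁,h₂;γ)/h₂ = 1/r`. -/
theorem high_risk_aversion_limit (r δ κ m₁ m₂ α β zα zβ : ℝ)
    (hr : 0 < r) (hδ : 0 < δ) (hκ : 0 < κ)
    (hQ1 : κ ^ 2 / 2 * m₁ ^ 2 + (δ - r - κ ^ 2 / 2) * m₁ - δ = 0)
    (hQ2 : κ ^ 2 / 2 * m₂ ^ 2 + (δ - r - κ ^ 2 / 2) * m₂ - δ = 0)
    (hm1 : 1 < m₁) (hm2 : m₂ < 0)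
    (hα : 0 ≤ α) (hα' : α < 1 / δ) (hβ : 0 ≤ β)
    (hzα : zα ∈ Set.Ioc 0 (1 - α * δ))
    (hzαeq : 2 / (κ ^ 2 * m₁ * (m₁ - 1)) * zα ^ m₁ + zα / r * (m₂ - 1) + m₂ * (α - 1 / δ) = 0)
    (hzβ : zβ ∈ Set.Ici (1 + β * δ))
    (hzβeq : 2 / (κ ^ 2 * m₂ * (m₂ - 1)) * zβ ^ m₂ + zβ / r * (m₁ - 1) - m₁ * (β + 1 / δ) = 0) :
    ∀ h₁ h₂ : ℝ, 0 < h₂ → h₂ ≤ h₁ →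
      Filter.Tendsto (fun γ : ℝ =>
          (-(m₁ * C1 r δ κ γ m₁ m₂ β zβ h₁ h₂ * (zα * h₁ ^ (-γ)) ^ (m₁ - 1)) -
            m₂ * C2 r δ κ γ m₁ m₂ α zα h₁ * (zα * h₁ ^ (-γ)) ^ (m₂ - 1) + h₁ / r) / h₁)
        Filter.atTop (nhds (1 / r)) ∧
      Filter.Tendsto (fun γ : ℝ =>
          (-(m₁ * C5 r δ κ γ m₁ m₂ β zβ h₂ * (zβ * h₂ ^ (-γ)) ^ (m₁ - 1)) -
            m₂ * C6 r δ κ γ m₁ m₂ α zα h₁ h₂ * (zβ * h₂ ^ (-γ)) ^ (m₂ - 1) + h₂ / r) / h₂)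
        Filter.atTop (nhds (1 / r)) := by
  intro h₁ h₂ hh₂ hle
  have hh₁ : 0 < h₁ := hh₂.trans_le hle
  have hzα0 : 0 < zα := hzα.1
  have hzβ0 : 0 < zβ := lt_of_lt_of_le (by positivity) hzβ
  have hm21 : m₂ < 1 := hm2.trans one_pos
  have hm12 : m₂ < m₁ := hm21.trans hm1
  have hs := tendsto_gammastar
  have hne1 : (m₁ - m₂) * (m₁ - 1) ≠ 0 :=
    mul_ne_zero (sub_ne_zero.mpr hm12.ne') (sub_ne_zero.mpr hm1.ne')
  have hne3 : (m₁ - m₂) * (m₂ - 1) ≠ 0 :=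
    mul_ne_zero (sub_ne_zero.mpr hm12.ne') (sub_ne_zero.mpr hm21.ne)
  have hne2 : κ ^ 2 * (m₁ - m₂) * m₁ * (m₁ - 1) * (m₁ - 1) ≠ 0 :=
    mul_ne_zero (mul_ne_zero (mul_ne_zero (mul_ne_zero (pow_ne_zero 2 hκ.ne')
      (sub_ne_zero.mpr hm12.ne')) (one_pos.trans hm1).ne') (sub_ne_zero.mpr hm1.ne'))
      (sub_ne_zero.mpr hm1.ne')
  have hne4 : κ ^ 2 * (m₁ - m₂) * m₂ * (m₂ - 1) * (m₂ - 1) ≠ 0 :=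
    mul_ne_zero (mul_ne_zero (mul_ne_zero (mul_ne_zero (pow_ne_zero 2 hκ.ne')
      (sub_ne_zero.mpr hm12.ne')) hm2.ne) (sub_ne_zero.mpr hm21.ne))
      (sub_ne_zero.mpr hm21.ne)
  -- coefficient limits
  have hc5 : Tendsto (fun γ : ℝ => (1 - (γ - 1) / γ) / ((m₁ - m₂) * (m₁ - (γ - 1) / γ)) *
      (m₂ * (β * δ + 1) / δ * zβ ^ (-m₁) + (1 - m₂) / r * zβ ^ (1 - m₁)))
      atTop (nhds 0) := by
    have h1 : Tendsto (fun γ : ℝ => (1 - (γ - 1) / γ) / ((m₁ - m₂) * (m₁ - (γ - 1) / γ)))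
        atTop (nhds ((1 - 1) / ((m₁ - m₂) * (m₁ - 1)))) :=
      (tendsto_const_nhds.sub hs).div
        (tendsto_const_nhds.mul (tendsto_const_nhds.sub hs)) hne1
    simpa using h1.mul_const
      (m₂ * (β * δ + 1) / δ * zβ ^ (-m₁) + (1 - m₂) / r * zβ ^ (1 - m₁))
  have hc2 : Tendsto (fun γ : ℝ => (1 - (γ - 1) / γ) / ((m₁ - m₂) * (m₂ - (γ - 1) / γ)) *
      (m₁ * (α * δ - 1) / δ * zα ^ (-m₂) + (m₁ - 1) / r * zα ^ (1 - m₂)))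
      atTop (nhds 0) := by
    have h1 : Tendsto (fun γ : ℝ => (1 - (γ - 1) / γ) / ((m₁ - m₂) * (m₂ - (γ - 1) / γ)))
        atTop (nhds ((1 - 1) / ((m₁ - m₂) * (m₂ - 1)))) :=
      (tendsto_const_nhds.sub hs).div
        (tendsto_const_nhds.mul (tendsto_const_nhds.sub hs)) hne3
    simpa using h1.mul_const
      (m₁ * (α * δ - 1) / δ * zα ^ (-m₂) + (m₁ - 1) / r * zα ^ (1 - m₂))
  have hd3 : Tendsto (fun γ : ℝ => 2 * ((γ - 1) / γ - 1) /
      (κ ^ 2 * (m₁ - m₂) * m₁ * (m₁ - 1) * (m₁ - (γ - 1) / γ))) atTop (nhds 0) := by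
    have h1 : Tendsto (fun γ : ℝ => 2 * ((γ - 1) / γ - 1) /
        (κ ^ 2 * (m₁ - m₂) * m₁ * (m₁ - 1) * (m₁ - (γ - 1) / γ)))
        atTop (nhds (2 * (1 - 1) / (κ ^ 2 * (m₁ - m₂) * m₁ * (m₁ - 1) * (m₁ - 1)))) :=
      ((hs.sub_const 1).const_mul 2).div
        (tendsto_const_nhds.mul (tendsto_const_nhds.sub hs)) hne2
    simpa using h1
  have hd1 : Tendsto (fun γ : ℝ => 2 * (1 - (γ - 1) / γ) /
      (κ ^ 2 * (m₁ - m₂) * m₁ * (m₁ - 1) * (m₁ - (γ - 1) / γ))) atTop (nhds 0) := by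
    have h1 : Tendsto (fun γ : ℝ => 2 * (1 - (γ - 1) / γ) /
        (κ ^ 2 * (m₁ - m₂) * m₁ * (m₁ - 1) * (m₁ - (γ - 1) / γ)))
        atTop (nhds (2 * (1 - 1) / (κ ^ 2 * (m₁ - m₂) * m₁ * (m₁ - 1) * (m₁ - 1)))) :=
      ((tendsto_const_nhds.sub hs).const_mul 2).div
        (tendsto_const_nhds.mul (tendsto_const_nhds.sub hs)) hne2
    simpa using h1
  have hd4 : Tendsto (fun γ : ℝ => 2 * ((γ - 1) / γ - 1) /
      (κ ^ 2 * (m₁ - m₂) * m₂ * (m₂ - 1) * (m₂ - (γ - 1) / γ))) atTop (nhds 0) := by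
    have h1 : Tendsto (fun γ : ℝ => 2 * ((γ - 1) / γ - 1) /
        (κ ^ 2 * (m₁ - m₂) * m₂ * (m₂ - 1) * (m₂ - (γ - 1) / γ)))
        atTop (nhds (2 * (1 - 1) / (κ ^ 2 * (m₁ - m₂) * m₂ * (m₂ - 1) * (m₂ - 1)))) :=
      ((hs.sub_const 1).const_mul 2).div
        (tendsto_const_nhds.mul (tendsto_const_nhds.sub hs)) hne4
    simpa using h1
  have hd6 : Tendsto (fun γ : ℝ => 2 * (1 - (γ - 1) / γ) /
      (κ ^ 2 * (m₁ - m₂) * m₂ * (m₂ - 1) * (m₂ - (γ - 1) / γ))) atTop (nhds 0) := by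
    have h1 : Tendsto (fun γ : ℝ => 2 * (1 - (γ - 1) / γ) /
        (κ ^ 2 * (m₁ - m₂) * m₂ * (m₂ - 1) * (m₂ - (γ - 1) / γ)))
        atTop (nhds (2 * (1 - 1) / (κ ^ 2 * (m₁ - m₂) * m₂ * (m₂ - 1) * (m₂ - 1)))) :=
      ((tendsto_const_nhds.sub hs).const_mul 2).div
        (tendsto_const_nhds.mul (tendsto_const_nhds.sub hs)) hne4
    simpa using h1
  -- bounded ratio powers
  have hbd1 : ∀ᶠ γ : ℝ in atTop, |(h₂ / h₁) ^ (γ * (m₁ - 1))| ≤ 1 := by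
    filter_upwards [eventually_ge_atTop (0 : ℝ)] with γ hγ
    rw [abs_of_nonneg (Real.rpow_nonneg (by positivity) _)]
    exact Real.rpow_le_one (by positivity) (div_le_one_of_le₀ hle hh₁.le)
      (mul_nonneg hγ (by linarith))
  have hbd2 : ∀ᶠ γ : ℝ in atTop, |(h₁ / h₂) ^ (γ * (m₂ - 1))| ≤ 1 := by
    filter_upwards [eventually_ge_atTop (0 : ℝ)] with γ hγ
    rw [abs_of_nonneg (Real.rpow_nonneg (by positivity) _)]
    exact Real.rpow_le_one_of_one_le_of_nonpos ((one_le_div hh₂).mpr hle)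
      (mul_nonpos_of_nonneg_of_nonpos hγ (by linarith))
  -- the four boundary terms
  have hT1 : Tendsto (fun γ : ℝ => m₁ * C1 r δ κ γ m₁ m₂ β zβ h₁ h₂ *
      (zα * h₁ ^ (-γ)) ^ (m₁ - 1)) atTop (nhds 0) := by
    have hA : Tendsto (fun γ : ℝ => m₁ *
        ((1 - (γ - 1) / γ) / ((m₁ - m₂) * (m₁ - (γ - 1) / γ)) *
          (m₂ * (β * δ + 1) / δ * zβ ^ (-m₁) + (1 - m₂) / r * zβ ^ (1 - m₁)) +
         2 * ((γ - 1) / γ - 1) / (κ ^ 2 * (m₁ - m₂) * m₁ * (m₁ - 1) * (m₁ - (γ - 1) / γ))) *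
        (zα ^ (m₁ - 1) * h₂)) atTop (nhds 0) := by
      simpa using ((hc5.add hd3).const_mul m₁).mul_const (zα ^ (m₁ - 1) * h₂)
    have hB : Tendsto (fun γ : ℝ => m₁ *
        (2 * (1 - (γ - 1) / γ) / (κ ^ 2 * (m₁ - m₂) * m₁ * (m₁ - 1) * (m₁ - (γ - 1) / γ))) *
        (zα ^ (m₁ - 1) * h₁)) atTop (nhds 0) := by
      simpa using (hd1.const_mul m₁).mul_const (zα ^ (m₁ - 1) * h₁)
    have hsum : Tendsto (fun γ : ℝ => m₁ *
        ((1 - (γ - 1) / γ) / ((m₁ - m₂) * (m₁ - (γ - 1) / γ)) *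
          (m₂ * (β * δ + 1) / δ * zβ ^ (-m₁) + (1 - m₂) / r * zβ ^ (1 - m₁)) +
         2 * ((γ - 1) / γ - 1) / (κ ^ 2 * (m₁ - m₂) * m₁ * (m₁ - 1) * (m₁ - (γ - 1) / γ))) *
        (zα ^ (m₁ - 1) * h₂) * (h₂ / h₁) ^ (γ * (m₁ - 1)) + m₁ *
        (2 * (1 - (γ - 1) / γ) / (κ ^ 2 * (m₁ - m₂) * m₁ * (m₁ - 1) * (m₁ - (γ - 1) / γ))) *
        (zα ^ (m₁ - 1) * h₁)) atTop (nhds 0) := by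
      simpa using (tendsto_mul_bounded hA hbd1).add hB
    refine Tendsto.congr (fun γ => ?_) hsum
    have e1 := rpow_key' hh₁ hzα0 γ m₁
    have e2 := rpow_key hh₂ hh₁ hzα0 γ m₁
    simp only [C1, C3, C5]
    linear_combination (-(m₁ *
        ((1 - (γ - 1) / γ) / ((m₁ - m₂) * (m₁ - (γ - 1) / γ)) *
          (m₂ * (β * δ + 1) / δ * zβ ^ (-m₁) + (1 - m₂) / r * zβ ^ (1 - m₁)) +
         2 * ((γ - 1) / γ - 1) / (κ ^ 2 * (m₁ - m₂) * m₁ * (m₁ - 1) * (m₁ - (γ - 1) / γ))))) * e2 -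
      (m₁ * (2 * (1 - (γ - 1) / γ) /
        (κ ^ 2 * (m₁ - m₂) * m₁ * (m₁ - 1) * (m₁ - (γ - 1) / γ)))) * e1
  have hT2 : Tendsto (fun γ : ℝ => m₂ * C2 r δ κ γ m₁ m₂ α zα h₁ *
      (zα * h₁ ^ (-γ)) ^ (m₂ - 1)) atTop (nhds 0) := by
    have hA : Tendsto (fun γ : ℝ => m₂ *
        ((1 - (γ - 1) / γ) / ((m₁ - m₂) * (m₂ - (γ - 1) / γ)) *
          (m₁ * (α * δ - 1) / δ * zα ^ (-m₂) + (m₁ - 1) / r * zα ^ (1 - m₂))) *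
        (zα ^ (m₂ - 1) * h₁)) atTop (nhds 0) := by
      simpa using (hc2.const_mul m₂).mul_const (zα ^ (m₂ - 1) * h₁)
    refine Tendsto.congr (fun γ => ?_) hA
    have e := rpow_key' hh₁ hzα0 γ m₂
    simp only [C2]
    linear_combination (-(m₂ *
        ((1 - (γ - 1) / γ) / ((m₁ - m₂) * (m₂ - (γ - 1) / γ)) *
          (m₁ * (α * δ - 1) / δ * zα ^ (-m₂) + (m₁ - 1) / r * zα ^ (1 - m₂))))) * e
  have hT3 : Tendsto (fun γ : ℝ => m₁ * C5 r δ κ γ m₁ m₂ β zβ h₂ *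
      (zβ * h₂ ^ (-γ)) ^ (m₁ - 1)) atTop (nhds 0) := by
    have hA : Tendsto (fun γ : ℝ => m₁ *
        ((1 - (γ - 1) / γ) / ((m₁ - m₂) * (m₁ - (γ - 1) / γ)) *
          (m₂ * (β * δ + 1) / δ * zβ ^ (-m₁) + (1 - m₂) / r * zβ ^ (1 - m₁))) *
        (zβ ^ (m₁ - 1) * h₂)) atTop (nhds 0) := by
      simpa using (hc5.const_mul m₁).mul_const (zβ ^ (m₁ - 1) * h₂)
    refine Tendsto.congr (fun γ => ?_) hA
    have e := rpow_key' hh₂ hzβ0 γ m₁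
    simp only [C5]
    linear_combination (-(m₁ *
        ((1 - (γ - 1) / γ) / ((m₁ - m₂) * (m₁ - (γ - 1) / γ)) *
          (m₂ * (β * δ + 1) / δ * zβ ^ (-m₁) + (1 - m₂) / r * zβ ^ (1 - m₁))))) * e
  have hT4 : Tendsto (fun γ : ℝ => m₂ * C6 r δ κ γ m₁ m₂ α zα h₁ h₂ *
      (zβ * h₂ ^ (-γ)) ^ (m₂ - 1)) atTop (nhds 0) := by
    have hA : Tendsto (fun γ : ℝ => m₂ *
        ((1 - (γ - 1) / γ) / ((m₁ - m₂) * (m₂ - (γ - 1) / γ)) *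
          (m₁ * (α * δ - 1) / δ * zα ^ (-m₂) + (m₁ - 1) / r * zα ^ (1 - m₂)) -
         2 * ((γ - 1) / γ - 1) / (κ ^ 2 * (m₁ - m₂) * m₂ * (m₂ - 1) * (m₂ - (γ - 1) / γ))) *
        (zβ ^ (m₂ - 1) * h₁)) atTop (nhds 0) := by
      simpa using ((hc2.sub hd4).const_mul m₂).mul_const (zβ ^ (m₂ - 1) * h₁)
    have hB : Tendsto (fun γ : ℝ => m₂ *
        (2 * (1 - (γ - 1) / γ) / (κ ^ 2 * (m₁ - m₂) * m₂ * (m₂ - 1) * (m₂ - (γ - 1) / γ))) *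
        (zβ ^ (m₂ - 1) * h₂)) atTop (nhds 0) := by
      simpa using (hd6.const_mul m₂).mul_const (zβ ^ (m₂ - 1) * h₂)
    have hsum : Tendsto (fun γ : ℝ => m₂ *
        ((1 - (γ - 1) / γ) / ((m₁ - m₂) * (m₂ - (γ - 1) / γ)) *
          (m₁ * (α * δ - 1) / δ * zα ^ (-m₂) + (m₁ - 1) / r * zα ^ (1 - m₂)) -
         2 * ((γ - 1) / γ - 1) / (κ ^ 2 * (m₁ - m₂) * m₂ * (m₂ - 1) * (m₂ - (γ - 1) / γ))) *
        (zβ ^ (m₂ - 1) * h₁) * (h₁ / h₂) ^ (γ * (m₂ - 1)) - m₂ *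
        (2 * (1 - (γ - 1) / γ) / (κ ^ 2 * (m₁ - m₂) * m₂ * (m₂ - 1) * (m₂ - (γ - 1) / γ))) *
        (zβ ^ (m₂ - 1) * h₂)) atTop (nhds 0) := by
      simpa using (tendsto_mul_bounded hA hbd2).sub hB
    refine Tendsto.congr (fun γ => ?_) hsum
    have e4 := rpow_key hh₁ hh₂ hzβ0 γ m₂
    have e5 := rpow_key' hh₂ hzβ0 γ m₂
    simp only [C6, C4, C2]
    linear_combination (-(m₂ *
        ((1 - (γ - 1) / γ) / ((m₁ - m₂) * (m₂ - (γ - 1) / γ)) *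
          (m₁ * (α * δ - 1) / δ * zα ^ (-m₂) + (m₁ - 1) / r * zα ^ (1 - m₂)) -
         2 * ((γ - 1) / γ - 1) / (κ ^ 2 * (m₁ - m₂) * m₂ * (m₂ - 1) * (m₂ - (γ - 1) / γ))))) * e4 +
      (m₂ * (2 * (1 - (γ - 1) / γ) /
        (κ ^ 2 * (m₁ - m₂) * m₂ * (m₂ - 1) * (m₂ - (γ - 1) / γ)))) * e5
  constructor
  · have h0 : (1 : ℝ) / r = (-(0 : ℝ) - 0 + h₁ / r) / h₁ := by
      field_simp
      ring
    rw [h0]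
    exact ((hT1.neg.sub hT2).add_const (h₁ / r)).div_const h₁
  · have h0 : (1 : ℝ) / r = (-(0 : ℝ) - 0 + h₂ / r) / h₂ := by
      field_simp
      ring
    rw [h0]
    exact ((hT3.neg.sub hT4).add_const (h₂ / r)).div_const h₂
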